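/- arXiv:math/9607223 — 2 statements merged into one kernel-verified Lean document; each statement's English description precedes it below -/
import Mathlib

section
/- Let r ≥ 1 and 1 ≤ k ≤ r be integers, let m_{k+1}, …, m_r be integers with m_u ≥ 2 for every u, and set c₁ = k + ∑_{u=k+1}^r m_u. Assume c₁ < 2r. Then for every integer i ≥ 0, the coefficient of t^i in the polynomial (1+t)^{2r−c₁−1+i} · ∏_{u=k+1}^r (1 − (m_u − 1)·t)^{m_u − 2} equals the coefficient of t^i in the formal power series ((1−t)^k)^{−1} · ∏_{u=k+1}^r (1 − m_u·t)^{m_u − 2} in ℤ⟦t⟧. -/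
/-! Substituting `t ↦ t/(1-t)` turns `1 - (m-1)t` into `(1 - mt)/(1 - t)`. Hence, with
`D = ∑ (m_u - 2)` and `Q = ∑ q_j t^j` the polynomial product, the series is
`(1-t)^{-(k-D)} Q(t/(1-t)) = ∑_j q_j t^j (1-t)^{-(k-D+j)}`. As `k - D = 2r - c₁`, its
coefficient of `t^i` is `∑_j q_j binom(2r-c₁-1+i, i-j)`, the coefficient of `t^i` in
`(1+t)^{2r-c₁-1+i} Q(t)`. -/

open scoped Polynomial

theorem Fin.card_filter_le_val (r k : ℕ) :
    (Finset.univ.filter (fun u : Fin r => k ≤ (u : ℕ))).card = r - k := by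
  rw [← Finset.card_map Fin.valEmbedding, ← Nat.card_Ico k r]
  congr 1
  ext x
  simp only [Finset.mem_map, Finset.mem_filter, Finset.mem_univ, true_and,
    Fin.valEmbedding_apply, Finset.mem_Ico]
  constructor
  · rintro ⟨u, hu, rfl⟩
    exact ⟨hu, u.isLt⟩
  · rintro ⟨hx, hxr⟩
    exact ⟨⟨x, hxr⟩, hx, rfl⟩

namespace PowerSeries

variable {R : Type*} [CommRing R]

theorem invOfUnit_one_sub_X_pow (k : ℕ) :
    invOfUnit ((1 - X : R⟦X⟧) ^ k) 1 = (invOneSubPow R k).val := by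
  set u := invOneSubPow R k
  calc invOfUnit ((1 - X : R⟦X⟧) ^ k) 1 = u.val * u.inv * invOfUnit ((1 - X) ^ k) 1 := by
        rw [u.val_inv, one_mul]
    _ = u.val := by
        rw [mul_assoc, invOneSubPow_inv_eq_one_sub_pow, mul_invOfUnit _ 1 (by simp), mul_one]

theorem coeff_X_pow_mul_invOneSubPow (n i j : ℕ) :
    coeff i (X ^ j * (invOneSubPow R (n + 1 + j)).val) =
      if j ≤ i then ((n + i).choose (i - j) : R) else 0 := by
  rw [coeff_X_pow_mul', add_right_comm, invOneSubPow_val_succ_eq_mk_add_choose]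
  split_ifs with hji
  · rw [coeff_mk, show n + j + (i - j) = n + i by omega,
      Nat.choose_symm_of_eq_add (show n + i = n + j + (i - j) by omega)]
  · rfl

theorem invOneSubPow_one_pow_mul (n j : ℕ) :
    (invOneSubPow R 1).val ^ j * (invOneSubPow R n).val = (invOneSubPow R (n + j)).val := by
  rw [← Units.val_pow_eq_pow_val, ← Units.val_mul]
  simp_rw [invOneSubPow_eq_inv_one_sub_pow, ← pow_mul, ← pow_add, one_mul, add_comm]

theorem coeff_one_add_X_pow_mul (Q : R[X]) (n i : ℕ) :
    ((1 + Polynomial.X) ^ (n + i) * Q).coeff i =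
      coeff i ((invOneSubPow R (n + 1)).val * Q.eval₂ C (X * (invOneSubPow R 1).val)) := by
  induction Q using Polynomial.induction_on' with
  | add p q hp hq =>
    rw [mul_add, Polynomial.coeff_add, hp, hq, Polynomial.eval₂_add, mul_add, map_add]
  | monomial j a =>
    have hseries : (invOneSubPow R (n + 1)).val * (C a * (X * (invOneSubPow R 1).val) ^ j) =
        C a * (X ^ j * (invOneSubPow R (n + 1 + j)).val) := by
      rw [← invOneSubPow_one_pow_mul (n + 1) j]; ring
    rw [Polynomial.eval₂_monomial, hseries, coeff_C_mul, coeff_X_pow_mul_invOneSubPow,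
      ← Polynomial.C_mul_X_pow_eq_monomial, mul_left_comm, Polynomial.coeff_C_mul,
      Polynomial.coeff_mul_X_pow', Polynomial.coeff_one_add_X_pow]

theorem one_sub_X_mul_eval₂_one_sub_C_sub_one_mul_X (b : R) :
    (1 - X) *
        (1 - Polynomial.C (b - 1) * Polynomial.X).eval₂ C (X * (invOneSubPow R 1).val) =
      1 - C b * X := by
  have hw : (1 - X : R⟦X⟧) * (invOneSubPow R 1).val = 1 := by
    simpa [invOneSubPow_zero] using
      one_sub_pow_mul_invOneSubPow_val_add_eq_invOneSubPow_val (S := R) 0 1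
  simp only [Polynomial.eval₂_sub, Polynomial.eval₂_one, Polynomial.eval₂_mul,
    Polynomial.eval₂_C, Polynomial.eval₂_X, map_sub, map_one]
  linear_combination (1 - C b) * X * hw

theorem one_sub_X_pow_sum_mul_eval₂_prod {ι : Type*} (F : Finset ι) (b : ι → R)
    (e : ι → ℕ) :
    (1 - X) ^ (∑ u ∈ F, e u) *
        (∏ u ∈ F, (1 - Polynomial.C (b u - 1) * Polynomial.X) ^ e u).eval₂ C
          (X * (invOneSubPow R 1).val) =
      ∏ u ∈ F, (1 - C (b u) * X) ^ e u := by
  rw [Polynomial.eval₂_finsetProd, ← Finset.prod_pow_eq_pow_sum, ← Finset.prod_mul_distrib]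
  refine Finset.prod_congr rfl fun u _ => ?_
  rw [Polynomial.eval₂_pow, ← mul_pow, one_sub_X_mul_eval₂_one_sub_C_sub_one_mul_X]

end PowerSeries

theorem coeff_poly_eq_coeff_series_general
    (r k : ℕ) (hkr : k ≤ r)
    (m : Fin r → ℕ) (hm : ∀ u : Fin r, k ≤ (u : ℕ) → 2 ≤ m u)
    (c₁ : ℕ) (hc₁ : c₁ = k + ∑ u ∈ Finset.univ.filter (fun u : Fin r => k ≤ (u : ℕ)), m u)
    (hlt : c₁ < 2 * r) (i : ℕ) :
    Polynomial.coeff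
      ((1 + Polynomial.X) ^ (2 * r - c₁ - 1 + i) *
        ∏ u ∈ Finset.univ.filter (fun u : Fin r => k ≤ (u : ℕ)),
          (1 - Polynomial.C ((m u : ℤ) - 1) * Polynomial.X) ^ (m u - 2)) i
    = PowerSeries.coeff (R := ℤ) i
        (PowerSeries.invOfUnit ((1 - PowerSeries.X) ^ k) 1 *
          ∏ u ∈ Finset.univ.filter (fun u : Fin r => k ≤ (u : ℕ)),
            (1 - PowerSeries.C (R := ℤ) (m u : ℤ) * PowerSeries.X) ^ (m u - 2)) := by
  set F := Finset.univ.filter (fun u : Fin r => k ≤ (u : ℕ))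
  set D := ∑ u ∈ F, (m u - 2)
  have hsum : ∑ u ∈ F, m u = D + 2 * (r - k) := by
    rw [← Fin.card_filter_le_val, mul_comm, ← smul_eq_mul, ← Finset.sum_const,
      ← Finset.sum_add_distrib]
    exact Finset.sum_congr rfl fun u hu =>
      (Nat.sub_add_cancel (hm u (Finset.mem_filter.mp hu).2)).symm
  have hk_eq : k = 2 * r - c₁ - 1 + 1 + D := by omega
  have hinv : (PowerSeries.invOneSubPow ℤ k).val * (1 - PowerSeries.X) ^ D =
      (PowerSeries.invOneSubPow ℤ (2 * r - c₁ - 1 + 1)).val := by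
    rw [mul_comm, hk_eq, PowerSeries.one_sub_pow_mul_invOneSubPow_val_add_eq_invOneSubPow_val]
  rw [PowerSeries.invOfUnit_one_sub_X_pow, ← PowerSeries.one_sub_X_pow_sum_mul_eval₂_prod,
    ← mul_assoc, hinv, PowerSeries.coeff_one_add_X_pow_mul]

/-- The key coefficient identity from the proof of Lemma 5.12: for `1 ≤ k ≤ r`,
`m_u ≥ 2` for `k+1 ≤ u ≤ r` (0-indexed: `k ≤ u < r`), and
`c₁ = k + ∑_{u=k+1}^r m_u < 2r`, the coefficient of `t^i` in the polynomial
`(1+t)^{2r−c₁−1+i} · ∏_{u>k} (1 − (m_u−1)t)^{m_u−2}` equals the coefficient of `t^i`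
in the power series `((1−t)^k)⁻¹ · ∏_{u>k} (1 − m_u t)^{m_u−2}` in `ℤ⟦t⟧`. -/
theorem coeff_poly_eq_coeff_series
    (r k : ℕ) (hr : 1 ≤ r) (hk : 1 ≤ k) (hkr : k ≤ r)
    (m : Fin r → ℕ) (hm : ∀ u : Fin r, k ≤ (u : ℕ) → 2 ≤ m u)
    (c₁ : ℕ) (hc₁ : c₁ = k + ∑ u ∈ Finset.univ.filter (fun u : Fin r => k ≤ (u : ℕ)), m u)
    (hlt : c₁ < 2 * r) (i : ℕ) :
    Polynomial.coeff
      ((1 + Polynomial.X) ^ (2 * r - c₁ - 1 + i) *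
        ∏ u ∈ Finset.univ.filter (fun u : Fin r => k ≤ (u : ℕ)),
          (1 - Polynomial.C ((m u : ℤ) - 1) * Polynomial.X) ^ (m u - 2)) i
    = PowerSeries.coeff (R := ℤ) i
        (PowerSeries.invOfUnit ((1 - PowerSeries.X) ^ k) 1 *
          ∏ u ∈ Finset.univ.filter (fun u : Fin r => k ≤ (u : ℕ)),
            (1 - PowerSeries.C (R := ℤ) (m u : ℤ) * PowerSeries.X) ^ (m u - 2)) :=
  coeff_poly_eq_coeff_series_general r k hkr m hm c₁ hc₁ hlt i
end

section
/- Let r ≥ 1 and 1 ≤ k ≤ r be integers, let m₁ = ⋯ = m_k = 1, and let m_{k+1}, …, m_r be integers with m_u ≥ 2 for every u > k; set c₁ = ∑_{u=1}^r m_u and assume c₁ < 2r. Then for every integer i ≥ 0, ∑_{j=0}^i (−1)^j · C(2r−c₁−1+i, i−j) · ( ∑_{(j_{k+1},…,j_r) ∈ ℕ^{r−k}, j_{k+1}+⋯+j_r = j} ∏_{u=k+1}^r C(m_u−2, j_u)·(m_u−1)^{j_u} ) = ∑_{j=0}^i h_{i−j}(m₁,…,m_r) · ( ∑_{(j₁,…,j_r)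 ∈ ℕ^r, j₁+⋯+j_r = j} ∏_{u=1}^r C(m_u−1, j_u)·(−m_u)^{j_u} ). -/
/-- The complete homogeneous symmetric polynomial of degree `i` evaluated at
`(m 0, …, m (r-1))`:  `h_i(m) = ∑_{j₁+⋯+j_r = i} ∏_u m_u^{j_u}`. -/
def completeHom (r : ℕ) (m : Fin r → ℕ) (i : ℕ) : ℤ :=
  ∑ j ∈ Finset.Nat.antidiagonalTuple r i, ∏ u, (m u : ℤ) ^ j u

/-- The inclusion `Fin (r-k) → Fin r` sending `v` to `k + v`, used to index
the tuple `(m_{k+1}, …, m_r)` (0-indexed: entries `k, …, r-1`). -/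
def finShift (r k : ℕ) (hkr : k ≤ r) (v : Fin (r - k)) : Fin r :=
  ⟨k + v, by have := v.isLt; omega⟩

/-! Both sides are the `i`-th coefficient of `∏_{u>k} (1 - m_u X)^(m_u-2) / (1-X)^k`.
On the right this power series is written as `∏_u (1 - m_u X)⁻¹ · ∏_u (1 - m_u X)^(m_u-1)`: the
first factor generates the `h_i(m)`, and each `m_u = 1` contributes a factor `(1-X)⁻¹`.
On the left, substituting `y = -X/(1-X)` into `∏_{u>k} (1 + (m_u-1) y)^(m_u-2)` gives
`∏_{u>k} (1 - m_u X)^(m_u-2) / (1-X)^s` with `s = ∑_{u>k} (m_u-2)`, and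
`(-1)^j C(N+i, i-j)` is the `i`-th coefficient of `y^j/(1-X)^(N+1)`; here `N = 2r - c₁ - 1`
and `N + 1 + s = k`. -/

open Finset PowerSeries

namespace PowerSeries

theorem coeff_prod_fin_eq_sum_antidiagonalTuple {R : Type*} [CommSemiring R] {n : ℕ}
    (f : Fin n → R⟦X⟧) (d : ℕ) :
    coeff d (∏ u, f u) = ∑ j ∈ Nat.antidiagonalTuple n d, ∏ u, coeff (j u) (f u) := by
  rw [coeff_prod, finsuppAntidiag, sum_map, ← piAntidiag_univ_fin_eq_antidiagonalTuple]
  exact sum_attach _ (fun j : Fin n → ℕ => ∏ u, coeff (j u) (f u))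

variable {R : Type*} [CommRing R]

theorem coeff_one_add_C_mul_X_pow (c : R) (e t : ℕ) :
    coeff t ((1 + C c * X) ^ e) = e.choose t * c ^ t := by
  have h : (1 + C c * X : R⟦X⟧) ^ e = rescale c ((1 + Polynomial.X) ^ e : Polynomial R) := by
    simp [rescale_X]
  rw [h, coeff_rescale, Polynomial.coeff_coe, Polynomial.coeff_one_add_X_pow, mul_comm]

theorem coeff_prod_one_add_C_mul_X_pow {n : ℕ} (c : Fin n → R) (e : Fin n → ℕ) (j : ℕ) :
    coeff j (∏ v, (1 + C (c v) * X) ^ e v) =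
      ∑ jv ∈ Nat.antidiagonalTuple n j, ∏ v, ((e v).choose (jv v) : R) * c v ^ jv v := by
  simp only [coeff_prod_fin_eq_sum_antidiagonalTuple, coeff_one_add_C_mul_X_pow]

theorem mk_pow_mul_one_sub_C_mul_X (a : R) : mk (a ^ ·) * (1 - C a * X) = 1 := by
  simpa [rescale_mk, rescale_X] using congrArg (rescale a) (mk_one_mul_one_sub_eq_one R)

theorem mk_pow_mul_one_sub_C_mul_X_pow_succ (a : R) (e : ℕ) :
    mk (a ^ ·) * (1 - C a * X) ^ (e + 1) = (1 - C a * X) ^ e := by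
  rw [pow_succ, mul_left_comm, mk_pow_mul_one_sub_C_mul_X, mul_one]

theorem coeff_mk_one_pow_mul_neg_X_mul_mk_one_pow (N i j : ℕ) :
    coeff i ((mk 1 : R⟦X⟧) ^ (N + 1) * (-X * mk 1) ^ j) =
      if j ≤ i then (-1 : R) ^ j * (N + i).choose (i - j) else 0 := by
  have h : (mk 1 : R⟦X⟧) ^ (N + 1) * (-X * mk 1) ^ j =
      C ((-1) ^ j) * (X ^ j * mk 1 ^ (N + j + 1)) := by
    rw [map_pow, map_neg, map_one]; ring
  rw [h, coeff_C_mul, coeff_X_pow_mul', mk_one_pow_eq_mk_choose_add, coeff_mk]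
  split_ifs with hji
  · rw [Nat.choose_symm_add, show N + j + (i - j) = N + i by omega]
  · rw [mul_zero]

theorem coeff_mk_one_pow_mul_aeval_neg_X_mul_mk_one (N i : ℕ) (p : Polynomial R) :
    coeff i ((mk 1 : R⟦X⟧) ^ (N + 1) * Polynomial.aeval (-X * mk 1 : R⟦X⟧) p) =
      ∑ j ∈ range (i + 1), (-1) ^ j * (N + i).choose (i - j) * p.coeff j := by
  rw [Polynomial.aeval_eq_sum_range' (n := i + 1 + p.natDegree) (by omega), mul_sum, map_sum,
    sum_range_add]
  simp only [mul_smul_comm, coeff_smul, coeff_mk_one_pow_mul_neg_X_mul_mk_one_pow, smul_eq_mul]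
  rw [sum_eq_zero (s := range p.natDegree) fun t _ => by rw [if_neg (by omega), mul_zero],
    add_zero]
  exact sum_congr rfl fun j hj => by rw [if_pos (by simpa [Nat.lt_succ_iff] using hj), mul_comm]

theorem aeval_neg_X_mul_mk_one_prod_one_add_C_mul_X_pow {n : ℕ} (c : Fin n → R)
    (e : Fin n → ℕ) :
    Polynomial.aeval (-X * mk 1 : R⟦X⟧) (∏ v, (1 + Polynomial.C (c v) * Polynomial.X) ^ e v) =
      mk 1 ^ (∑ v, e v) * ∏ v, (1 - C (c v + 1) * X) ^ e v := by
  have h : ∀ v, Polynomial.aeval (-X * mk 1 : R⟦X⟧) (1 + Polynomial.C (c v) * Polynomial.X) =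
      mk 1 * (1 - C (c v + 1) * X) := fun v => by
    simp only [map_add, map_one, map_mul, Polynomial.aeval_C, Polynomial.aeval_X, algebraMap_eq]
    linear_combination (-1 : R⟦X⟧) * mk_one_mul_one_sub_eq_one R
  simp only [map_prod, map_pow, h, mul_pow, prod_mul_distrib, prod_pow_eq_pow_sum]

theorem coeff_mk_one_pow_mul_prod_one_sub_C_mul_X_pow {n : ℕ} (N i : ℕ) (c : Fin n → R)
    (e : Fin n → ℕ) :
    coeff i ((mk 1 : R⟦X⟧) ^ (N + 1 + ∑ v, e v) * ∏ v, (1 - C (c v + 1) * X) ^ e v) =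
      ∑ j ∈ range (i + 1), (-1) ^ j * (N + i).choose (i - j) *
        ∑ jv ∈ Nat.antidiagonalTuple n j, ∏ v, ((e v).choose (jv v) : R) * c v ^ jv v := by
  have hcoeff : ∀ j, (∏ v, (1 + Polynomial.C (c v) * Polynomial.X) ^ e v).coeff j =
      ∑ jv ∈ Nat.antidiagonalTuple n j, ∏ v, ((e v).choose (jv v) : R) * c v ^ jv v := by
    intro j
    rw [← Polynomial.coeff_coe, ← coeff_prod_one_add_C_mul_X_pow,
      ← Polynomial.coeToPowerSeries.ringHom_apply]
    simp
  simp_rw [← hcoeff, ← coeff_mk_one_pow_mul_aeval_neg_X_mul_mk_one,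
    aeval_neg_X_mul_mk_one_prod_one_add_C_mul_X_pow, pow_add, mul_assoc]

end PowerSeries

@[to_additive]
theorem prod_univ_eq_prod_castLE_mul_prod_finShift {M : Type*} [CommMonoid M] (r k : ℕ)
    (hkr : k ≤ r) (f : Fin r → M) :
    ∏ u, f u = (∏ v : Fin k, f (Fin.castLE hkr v)) * ∏ v, f (finShift r k hkr v) := by
  rw [← Fin.prod_congr' f (Nat.add_sub_cancel' hkr), Fin.prod_univ_add]
  rfl

theorem coeff_prod_mk_pow_eq_completeHom (r : ℕ) (m : Fin r → ℕ) (i : ℕ) :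
    coeff i (∏ u, mk fun t => (m u : ℤ) ^ t) = completeHom r m i := by
  simp only [coeff_prod_fin_eq_sum_antidiagonalTuple, coeff_mk, completeHom]

theorem coeff_prod_mk_pow_mul_prod_one_add_C_mul_X_pow (r : ℕ) (m e : Fin r → ℕ) (i : ℕ) :
    coeff i ((∏ u, mk fun t => (m u : ℤ) ^ t) * ∏ u, (1 + C (-(m u : ℤ)) * X) ^ e u) =
      ∑ j ∈ range (i + 1), completeHom r m (i - j) *
        ∑ jv ∈ Nat.antidiagonalTuple r j,
          ∏ u, ((e u).choose (jv u) : ℤ) * (-(m u : ℤ)) ^ jv u := by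
  rw [mul_comm, coeff_mul, Nat.sum_antidiagonal_eq_sum_range_succ (fun a b =>
    coeff a (∏ u, (1 + C (-(m u : ℤ)) * X) ^ e u) * coeff b (∏ u, mk fun t => (m u : ℤ) ^ t))]
  refine sum_congr rfl fun j _ => ?_
  rw [coeff_prod_mk_pow_eq_completeHom, coeff_prod_one_add_C_mul_X_pow, mul_comm]

theorem two_mul_sub_sum_add_sum_finShift_sub_two (r k : ℕ) (hkr : k ≤ r) (m : Fin r → ℕ)
    (h1 : ∀ u : Fin r, (u : ℕ) < k → m u = 1) (h2 : ∀ u : Fin r, k ≤ (u : ℕ) → 2 ≤ m u)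
    (hlt : ∑ u, m u < 2 * r) :
    2 * r - ∑ u, m u + ∑ v, (m (finShift r k hkr v) - 2) = k := by
  have hhead : ∑ v : Fin k, m (Fin.castLE hkr v) = k := by
    rw [sum_congr rfl fun v _ => h1 (Fin.castLE hkr v) v.isLt]
    simp
  have htail :
      ∑ v, (m (finShift r k hkr v) - 2) + 2 * (r - k) = ∑ v, m (finShift r k hkr v) := by
    have htwo : ∑ _v : Fin (r - k), 2 = 2 * (r - k) := by simp [mul_comm]
    rw [← htwo, ← sum_add_distrib]
    exact sum_congr rfl fun v _ =>
      Nat.sub_add_cancel (h2 (finShift r k hkr v) (Nat.le_add_right k v))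
  have := sum_univ_eq_sum_castLE_add_sum_finShift r k hkr m
  omega

theorem prod_mk_pow_mul_prod_one_add_C_mul_X_pow_eq (r k : ℕ) (hkr : k ≤ r) (m : Fin r → ℕ)
    (h1 : ∀ u : Fin r, (u : ℕ) < k → m u = 1) (h2 : ∀ u : Fin r, k ≤ (u : ℕ) → 2 ≤ m u) :
    (∏ u, mk fun t => (m u : ℤ) ^ t) * ∏ u, (1 + C (-(m u : ℤ)) * X) ^ (m u - 1) =
      (mk 1 : ℤ⟦X⟧) ^ k *
        ∏ v, (1 - C (m (finShift r k hkr v) : ℤ) * X) ^ (m (finShift r k hkr v) - 2) := by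
  rw [← prod_mul_distrib, prod_univ_eq_prod_castLE_mul_prod_finShift r k hkr]
  congr 1
  · refine (prod_congr rfl fun v _ => ?_).trans (Fin.prod_const k _)
    rw [h1 _ v.isLt]
    ext
    simp
  · refine prod_congr rfl fun v _ => ?_
    obtain ⟨e, he⟩ := Nat.exists_eq_add_of_le' (h2 (finShift r k hkr v) (Nat.le_add_right k v))
    rw [he, map_neg, neg_mul, ← sub_eq_add_neg, show e + 2 - 1 = e + 1 by omega,
      mk_pow_mul_one_sub_C_mul_X_pow_succ, Nat.add_sub_cancel]

theorem GW_invariant_eq_classical_intersection_general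
    (r k : ℕ) (hkr : k ≤ r)
    (m : Fin r → ℕ)
    (h1 : ∀ u : Fin r, (u : ℕ) < k → m u = 1)
    (h2 : ∀ u : Fin r, k ≤ (u : ℕ) → 2 ≤ m u)
    (c₁ : ℕ) (hc₁ : c₁ = ∑ u, m u) (hlt : c₁ < 2 * r) (i : ℕ) :
    (∑ j ∈ Finset.range (i + 1),
        (-1 : ℤ) ^ j * (Nat.choose (2 * r - c₁ - 1 + i) (i - j) : ℤ) *
          ∑ jv ∈ Finset.Nat.antidiagonalTuple (r - k) j,
            ∏ v, ((m (finShift r k hkr v) - 2).choose (jv v) : ℤ) *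
              ((m (finShift r k hkr v) : ℤ) - 1) ^ jv v)
    = ∑ j ∈ Finset.range (i + 1),
        completeHom r m (i - j) *
          ∑ jv ∈ Finset.Nat.antidiagonalTuple r j,
            ∏ u, ((m u - 1).choose (jv u) : ℤ) * (-(m u : ℤ)) ^ jv u := by
  subst hc₁
  have hlhs := coeff_mk_one_pow_mul_prod_one_sub_C_mul_X_pow (2 * r - ∑ u, m u - 1) i
    (fun v => (m (finShift r k hkr v) : ℤ) - 1) (fun v => m (finShift r k hkr v) - 2)
  rw [Nat.sub_add_cancel (Nat.sub_pos_of_lt hlt),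
    two_mul_sub_sum_add_sum_finShift_sub_two r k hkr m h1 h2 hlt] at hlhs
  simp only [sub_add_cancel] at hlhs
  rw [← hlhs, ← prod_mk_pow_mul_prod_one_add_C_mul_X_pow_eq r k hkr m h1 h2,
    coeff_prod_mk_pow_mul_prod_one_add_C_mul_X_pow]

/-- The identity `W_i = T̃_i` at the numerical core of Proposition 5.14:
with `m₁ = ⋯ = m_k = 1`, `m_u ≥ 2` for `u > k`, and `c₁ = ∑ m_u < 2r`,
`∑_{j=0}^i (−1)^j C(2r−c₁−1+i, i−j) ∑_{j_{k+1}+⋯+j_r = j} ∏_{u>k} C(m_u−2, j_u)(m_u−1)^{j_u}`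
equals `∑_{j=0}^i h_{i−j}(m₁,…,m_r) ∑_{j₁+⋯+j_r = j} ∏_{u=1}^r C(m_u−1, j_u)(−m_u)^{j_u}`. -/
theorem GW_invariant_eq_classical_intersection
    (r k : ℕ) (hr : 1 ≤ r) (hk : 1 ≤ k) (hkr : k ≤ r)
    (m : Fin r → ℕ)
    (h1 : ∀ u : Fin r, (u : ℕ) < k → m u = 1)
    (h2 : ∀ u : Fin r, k ≤ (u : ℕ) → 2 ≤ m u)
    (c₁ : ℕ) (hc₁ : c₁ = ∑ u, m u) (hlt : c₁ < 2 * r) (i : ℕ) :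
    (∑ j ∈ Finset.range (i + 1),
        (-1 : ℤ) ^ j * (Nat.choose (2 * r - c₁ - 1 + i) (i - j) : ℤ) *
          ∑ jv ∈ Finset.Nat.antidiagonalTuple (r - k) j,
            ∏ v, ((m (finShift r k hkr v) - 2).choose (jv v) : ℤ) *
              ((m (finShift r k hkr v) : ℤ) - 1) ^ jv v)
    = ∑ j ∈ Finset.range (i + 1),
        completeHom r m (i - j) *
          ∑ jv ∈ Finset.Nat.antidiagonalTuple r j,
            ∏ u, ((m u - 1).choose (jv u) : ℤ) * (-(m u : ℤ)) ^ jv u :=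
  GW_invariant_eq_classical_intersection_general r k hkr m h1 h2 c₁ hc₁ hlt i
end
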